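/- arXiv:2502.16284 — 3 statements merged into one kernel-verified Lean document; each statement's English description precedes it below -/
import Mathlib

section
/- Let n ∈ ℕ, τ > 0, and let ν be a Borel probability measure on ℝⁿ. Define q(x | x₀) = (2πτ²)^(−n/2) · exp(−‖x − x₀‖² / (2τ²)) and p(x) = ∫ q(x | x₀) dν(x₀). Then p is differentiable on ℝⁿ and for every x the vector field x₀ ↦ q(x | x₀) • (x₀ − x)/τ² is ν-integrable, with gradient ∇p(x) = ∫ q(x | x₀) • ((x₀ − x)/τ²) dν(x₀); that is, differentiation under the integral sign holds: ∇p(x) = ∫ ∇ₓ q(x | x₀) dν(x₀). -/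
open Real MeasureTheory Filter Topology InnerProductSpace

/-!
The gradient of `x ↦ c · exp (-‖x - x₀‖² / (2τ²))` is the kernel times `(x₀ - x) / τ²`, and its
norm is at most `|c| / τ` uniformly in `x` and `x₀`, because `r · exp (-r² / (2τ²)) ≤ τ`
(which is `s ≤ exp (s² / 2)` for `s = r / τ`). A constant dominates against a finite measure,
so the gradient may be taken under the integral.
-/

theorem le_exp_sq_div_two (x : ℝ) : x ≤ exp (x ^ 2 / 2) :=
  calc x ≤ x ^ 2 / 2 + 1 := by nlinarith [sq_nonneg (x - 1)]
    _ ≤ exp (x ^ 2 / 2) := add_one_le_exp _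

theorem mul_exp_neg_sq_div_le {τ : ℝ} (hτ : 0 < τ) (r : ℝ) :
    r * exp (-r ^ 2 / (2 * τ ^ 2)) ≤ τ := by
  have h : r / τ ≤ exp (r ^ 2 / (2 * τ ^ 2)) := by
    convert le_exp_sq_div_two (r / τ) using 2
    field_simp
  rw [neg_div, exp_neg, ← div_eq_mul_inv, div_le_iff₀ (exp_pos _)]
  rwa [div_le_iff₀' hτ] at h

section DominatedGradient

variable {α E : Type*} [MeasurableSpace α] {μ : Measure α}
  [NormedAddCommGroup E] [InnerProductSpace ℝ E] [CompleteSpace E]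

theorem hasGradientAt_integral_of_dominated_of_gradient_le {F : E → α → ℝ} {G : E → α → E}
    {s : Set E} {x₀ : E} {bound : α → ℝ} (hs : s ∈ 𝓝 x₀)
    (hF_meas : ∀ᶠ x in 𝓝 x₀, AEStronglyMeasurable (F x) μ) (hF_int : Integrable (F x₀) μ)
    (hG_meas : AEStronglyMeasurable (G x₀) μ)
    (h_bound : ∀ᵐ a ∂μ, ∀ x ∈ s, ‖G x a‖ ≤ bound a)
    (bound_integrable : Integrable bound μ)
    (h_diff : ∀ᵐ a ∂μ, ∀ x ∈ s, HasGradientAt (F · a) (G x a) x) :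
    HasGradientAt (fun x ↦ ∫ a, F x a ∂μ) (∫ a, G x₀ a ∂μ) x₀ := by
  have hcomm : ∫ a, (toDual ℝ E (G x₀ a) : StrongDual ℝ E) ∂μ = toDual ℝ E (∫ a, G x₀ a ∂μ) :=
    (toDual ℝ E).toLinearIsometry.integral_comp_comm _
  rw [hasGradientAt_iff_hasFDerivAt, ← hcomm]
  refine hasFDerivAt_integral_of_dominated_of_fderiv_le (F' := fun x a ↦ toDual ℝ E (G x a))
    hs hF_meas hF_int ((toDual ℝ E).continuous.comp_aestronglyMeasurable hG_meas) ?_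
    bound_integrable ?_
  · filter_upwards [h_bound] with a ha x hx
    simpa using ha x hx
  · filter_upwards [h_diff] with a ha x hx
    exact hasGradientAt_iff_hasFDerivAt.mp (ha x hx)

end DominatedGradient

section GaussianKernel

variable {E : Type*} [NormedAddCommGroup E] {c τ : ℝ}

noncomputable def gaussianKernel (c τ : ℝ) (x x₀ : E) : ℝ := c * exp (-‖x - x₀‖ ^ 2 / (2 * τ ^ 2))

theorem continuous_gaussianKernel (x : E) : Continuous (gaussianKernel c τ x) := by
  unfold gaussianKernel; fun_prop

theorem norm_gaussianKernel_le (x x₀ : E) : ‖gaussianKernel c τ x x₀‖ ≤ |c| := by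
  rw [gaussianKernel, norm_mul, norm_of_nonneg (exp_pos _).le, Real.norm_eq_abs]
  refine mul_le_of_le_one_right (abs_nonneg c) (exp_le_one_iff.mpr ?_)
  rw [neg_div]
  exact neg_nonpos.mpr (by positivity)

theorem norm_gaussianKernel_smul_le [NormedSpace ℝ E] (hτ : 0 < τ) (x x₀ : E) :
    ‖gaussianKernel c τ x x₀ • ((1 / τ ^ 2) • (x₀ - x))‖ ≤ |c| / τ := by
  rw [norm_smul, norm_smul, gaussianKernel, norm_mul, norm_of_nonneg (exp_pos _).le,
    Real.norm_eq_abs, norm_of_nonneg (by positivity : (0 : ℝ) ≤ 1 / τ ^ 2), norm_sub_rev x]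
  calc |c| * exp (-‖x₀ - x‖ ^ 2 / (2 * τ ^ 2)) * (1 / τ ^ 2 * ‖x₀ - x‖)
      = |c| / τ ^ 2 * (‖x₀ - x‖ * exp (-‖x₀ - x‖ ^ 2 / (2 * τ ^ 2))) := by ring
    _ ≤ |c| / τ ^ 2 * τ := by gcongr; exact mul_exp_neg_sq_div_le hτ _
    _ = |c| / τ := by field_simp

theorem hasGradientAt_gaussianKernel [InnerProductSpace ℝ E] [CompleteSpace E] (x x₀ : E) :
    HasGradientAt (gaussianKernel c τ · x₀)
      (gaussianKernel c τ x x₀ • ((1 / τ ^ 2) • (x₀ - x))) x := by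
  have hexp : HasDerivAt (fun t ↦ c * exp (-t / (2 * τ ^ 2)))
      (c * (exp (-‖x - x₀‖ ^ 2 / (2 * τ ^ 2)) * (-1 / (2 * τ ^ 2)))) (‖x - x₀‖ ^ 2) :=
    ((hasDerivAt_neg _).div_const _).exp.const_mul c
  rw [hasGradientAt_iff_hasFDerivAt]
  refine (hexp.comp_hasFDerivAt x ((hasFDerivAt_sub_const x₀).norm_sq)).congr_fderiv ?_
  ext y
  simp only [map_sub, ContinuousLinearMap.comp_id, smul_apply,
    sub_apply, coe_innerSL_apply, nsmul_eq_mul, Nat.cast_ofNat, smul_eq_mul,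
    gaussianKernel, one_div, map_smul, toDual_apply_apply]
  ring

end GaussianKernel

section GaussianMixture

variable {E : Type*} [NormedAddCommGroup E] [MeasurableSpace E] [OpensMeasurableSpace E]
  (ν : Measure E) [IsFiniteMeasure ν] {c τ : ℝ}

theorem integrable_gaussianKernel (x : E) : Integrable (gaussianKernel c τ x) ν :=
  .of_bound (continuous_gaussianKernel x).aestronglyMeasurable |c|
    (.of_forall (norm_gaussianKernel_le x))

variable [InnerProductSpace ℝ E] [SecondCountableTopology E]

theorem integrable_gaussianKernel_smul (hτ : 0 < τ) (x : E) :
    Integrable (fun x₀ ↦ gaussianKernel c τ x x₀ • ((1 / τ ^ 2) • (x₀ - x))) ν :=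
  .of_bound (((continuous_gaussianKernel x).smul (by fun_prop)).aestronglyMeasurable) (|c| / τ)
    (.of_forall (norm_gaussianKernel_smul_le hτ x))

theorem hasGradientAt_integral_gaussianKernel [CompleteSpace E] (hτ : 0 < τ) (x : E) :
    HasGradientAt (fun x ↦ ∫ x₀, gaussianKernel c τ x x₀ ∂ν)
      (∫ x₀, gaussianKernel c τ x x₀ • ((1 / τ ^ 2) • (x₀ - x)) ∂ν) x :=
  hasGradientAt_integral_of_dominated_of_gradient_le (s := Set.univ) (bound := fun _ ↦ |c| / τ)
    univ_mem (.of_forall fun x' ↦ (integrable_gaussianKernel ν x').aestronglyMeasurable)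
    (integrable_gaussianKernel ν x) (integrable_gaussianKernel_smul ν hτ x).aestronglyMeasurable
    (.of_forall fun x₀ x' _ ↦ norm_gaussianKernel_smul_le hτ x' x₀) (integrable_const _)
    (.of_forall fun x₀ x' _ ↦ hasGradientAt_gaussianKernel x' x₀)

end GaussianMixture

/-- **Differentiation under the integral sign for the Gaussian mixture density.**
For `τ > 0` and a Borel probability measure `ν` on `ℝⁿ`, the mixture density
`p x = ∫ q(x | x₀) dν(x₀)` with `q(x | x₀) = (2πτ²)^(−n/2) · exp(−‖x − x₀‖²/(2τ²))`
is differentiable everywhere; at every `x` the vector field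
`x₀ ↦ q(x | x₀) • (x₀ − x)/τ²` (which is the gradient in `x` of `q(· | x₀)`)
is `ν`-integrable, and `∇p(x) = ∫ q(x | x₀) • ((x₀ − x)/τ²) dν(x₀)
= ∫ ∇ₓ q(x | x₀) dν(x₀)`. -/
theorem gaussian_mixture_density_gradient_under_integral
    (n : ℕ) (τ : ℝ) (hτ : 0 < τ)
    (ν : Measure (EuclideanSpace ℝ (Fin n))) [IsProbabilityMeasure ν]
    (q : EuclideanSpace ℝ (Fin n) → EuclideanSpace ℝ (Fin n) → ℝ)
    (hq : ∀ x x₀, q x x₀ = (2 * π * τ ^ 2) ^ (-(n : ℝ) / 2) *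
      Real.exp (-‖x - x₀‖ ^ 2 / (2 * τ ^ 2)))
    (p : EuclideanSpace ℝ (Fin n) → ℝ)
    (hp : ∀ x, p x = ∫ x₀, q x x₀ ∂ν) :
    (∀ x, DifferentiableAt ℝ p x) ∧
    (∀ x, Integrable (fun x₀ => q x x₀ • ((1 / τ ^ 2) • (x₀ - x))) ν) ∧
    (∀ x, gradient p x = ∫ x₀, q x x₀ • ((1 / τ ^ 2) • (x₀ - x)) ∂ν) ∧
    (∀ x, gradient p x = ∫ x₀, gradient (fun x' => q x' x₀) x ∂ν) := by
  set c : ℝ := (2 * π * τ ^ 2) ^ (-(n : ℝ) / 2)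
  obtain rfl : q = gaussianKernel c τ := funext₂ hq
  obtain rfl : p = fun x ↦ ∫ x₀, gaussianKernel c τ x x₀ ∂ν := funext hp
  have hgrad := hasGradientAt_integral_gaussianKernel (c := c) ν hτ
  refine ⟨fun x ↦ (hgrad x).differentiableAt, integrable_gaussianKernel_smul ν hτ,
    fun x ↦ (hgrad x).gradient, fun x ↦ ?_⟩
  rw [(hgrad x).gradient]
  congr 1
  funext x₀
  exact (hasGradientAt_gaussianKernel x x₀).gradient.symm
end

section
/- (Conditional score matching identity of Vincent, used to prove the denoising–force-field equivalence.) Let n, m ∈ ℕ, let ν be a Borel probability measure on ℝᵐ, and let q : ℝⁿ × ℝᵐ → ℝ be measurable with q(x, y) > 0 for all (x, y), such that for ν-a.e. y the map x ↦ q(x, y) is a probability density on ℝⁿ differentiable in x. Define p(x) = ∫ q(x, y) dν(y) and assume: (i) p(x) > 0 and p is differentiable with ∇p(x) = ∫ ∇ₓ q(x, y) dν(y) for all x; (ii) the score second moments ∫ ‖∇ log p(x)‖² p(x) dx and ∫∫ ‖∇ₓ log q(x, y)‖² q(x, y) dν(y) dx (with respect to Lebesgue measure in x) are finite. Then for every measurable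 f : ℝⁿ → ℝⁿ with ∫ ‖f(x)‖² p(x) dx < ∞ (and the required joint integrability), ∫ ‖f(x) − ∇ log p(x)‖² p(x) dx = ∫∫ ‖f(x) − ∇ₓ log q(x, y)‖² q(x, y) dν(y) dx + C, where C = ∫ ‖∇ log p(x)‖² p(x) dx − ∫∫ ‖∇ₓ log q(x, y)‖² q(x, y) dν(y) dx does not depend on f. -/
/-!
Expanding the squares, `∫ ‖f - ∇ log p‖² p - ∫ ‖∇ log p‖² p = ∫ ‖f‖² p - 2 ∫ ⟪f, ∇ log p⟫ p`,
and likewise for the double integrals over `q`. The quadratic terms in `f` agree because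
`∫ q(x, y) dν(y) = p(x)`, and the cross terms agree pointwise in `x` because
`p ∇ log p = ∇p = ∫ ∇ₓ q dν = ∫ q ∇ₓ log q dν`.
-/

open Real MeasureTheory Filter Topology
open scoped RealInnerProductSpace

section Gradient

variable {E : Type*} [NormedAddCommGroup E] [InnerProductSpace ℝ E] [CompleteSpace E]

theorem gradient_eq_smul_gradient_log {g : E → ℝ} {x : E} (hg : DifferentiableAt ℝ g x)
    (hpos : 0 < g x) : gradient g x = g x • gradient (fun x' => log (g x')) x := by
  have hlog : HasFDerivAt (fun x' => log (g x')) ((g x)⁻¹ • fderiv ℝ g x) x :=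
    (hasDerivAt_log hpos.ne').comp_hasFDerivAt x hg.hasFDerivAt
  rw [gradient, gradient, hlog.fderiv, map_smul, smul_inv_smul₀ hpos.ne']

theorem inner_gradient_log_mul {g : E → ℝ} {x : E} (hg : DifferentiableAt ℝ g x)
    (hpos : 0 < g x) (v : E) :
    ⟪v, gradient (fun x' => log (g x')) x⟫ * g x = ⟪v, gradient g x⟫ := by
  rw [gradient_eq_smul_gradient_log hg hpos, real_inner_smul_right, mul_comm]

theorem norm_gradient_le_of_log {g : E → ℝ} {x : E} (hg : DifferentiableAt ℝ g x)
    (hpos : 0 < g x) :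
    ‖gradient g x‖ ≤ (g x + ‖gradient (fun x' => log (g x')) x‖ ^ 2 * g x) / 2 := by
  rw [gradient_eq_smul_gradient_log hg hpos, norm_smul, norm_of_nonneg hpos.le]
  nlinarith [sq_nonneg (1 - ‖gradient (fun x' => log (g x')) x‖)]

theorem measurable_gradient [MeasurableSpace E] [BorelSpace E] (g : E → ℝ) :
    Measurable (gradient g) :=
  (InnerProductSpace.toDual ℝ E).symm.continuous.measurable.comp (measurable_fderiv ℝ g)

theorem gradient_eq_sum_fderiv_smul {ι : Type*} [Fintype ι] (b : OrthonormalBasis ι ℝ E)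
    (g : E → ℝ) (x : E) : gradient g x = ∑ i, fderiv ℝ g x (b i) • b i := by
  conv_lhs => rw [← b.sum_repr' (gradient g x)]
  simp only [real_inner_comm, inner_gradient_left]

end Gradient

section Parametric

variable {α : Type*} [MeasurableSpace α] {μ : Measure α}
  {E : Type*} [NormedAddCommGroup E]

/-- The directional derivative is the a.e. limit of the measurable difference quotients
`k (f (x + k⁻¹ v) - f x)`. -/
theorem aemeasurable_fderiv_apply [NormedSpace ℝ E] {f : E → α → ℝ}
    (hf : ∀ x, Measurable (f x)) {x : E} (v : E)
    (hd : ∀ᵐ y ∂μ, DifferentiableAt ℝ (fun x' => f x' y) x) :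
    AEMeasurable (fun y => fderiv ℝ (fun x' => f x' y) x v) μ := by
  refine aemeasurable_of_tendsto_metrizable_ae atTop
    (f := fun (k : ℕ) y => ((k : ℝ) + 1) * (f (x + ((k : ℝ) + 1)⁻¹ • v) y - f x y))
    (fun k => (((hf _).sub (hf x)).const_mul _).aemeasurable) ?_
  filter_upwards [hd] with y hy
  have hline : HasDerivAt (fun t : ℝ => x + t • v) v 0 := by
    simpa using ((hasDerivAt_id (0 : ℝ)).smul_const v).const_add x
  have hdir : HasDerivAt (fun t : ℝ => f (x + t • v) y) (fderiv ℝ (fun x' => f x' y) x v) 0 :=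
    hy.hasFDerivAt.comp_hasDerivAt_of_eq 0 hline (by simp)
  have hseq : Tendsto (fun k : ℕ => ((k : ℝ) + 1)⁻¹) atTop (𝓝[≠] 0) :=
    tendsto_nhdsWithin_of_tendsto_nhds_of_eventually_within _
      (by simpa [one_div] using
        (tendsto_one_div_add_atTop_nhds_zero_nat : Tendsto (fun k : ℕ => 1 / ((k : ℝ) + 1)) _ _))
      (Eventually.of_forall fun k => (inv_pos.2 k.cast_add_one_pos).ne')
  simpa [Function.comp_def] using hdir.tendsto_slope_zero.comp hseq

variable [InnerProductSpace ℝ E] [CompleteSpace E]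

theorem aestronglyMeasurable_gradient [FiniteDimensional ℝ E] {f : E → α → ℝ}
    (hf : ∀ x, Measurable (f x)) {x : E}
    (hd : ∀ᵐ y ∂μ, DifferentiableAt ℝ (fun x' => f x' y) x) :
    AEStronglyMeasurable (fun y => gradient (fun x' => f x' y) x) μ := by
  simp_rw [gradient_eq_sum_fderiv_smul (stdOrthonormalBasis ℝ E)]
  exact Finset.aestronglyMeasurable_fun_sum _ fun i _ =>
    (aemeasurable_fderiv_apply hf _ hd).aestronglyMeasurable.smul_const _

theorem integrable_gradient_of_integrable_norm_gradient_log_sq {q : E → α → ℝ} {x : E}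
    (hmeas : AEStronglyMeasurable (fun y => gradient (fun x' => q x' y) x) μ)
    (hpos : ∀ y, 0 < q x y) (hd : ∀ᵐ y ∂μ, DifferentiableAt ℝ (fun x' => q x' y) x)
    (hq : Integrable (q x) μ)
    (hscore : Integrable (fun y => ‖gradient (fun x' => log (q x' y)) x‖ ^ 2 * q x y) μ) :
    Integrable (fun y => gradient (fun x' => q x' y) x) μ :=
  Integrable.mono' ((hq.add hscore).div_const 2) hmeas <| by
    filter_upwards [hd] with y hy using norm_gradient_le_of_log hy (hpos y)

theorem inner_gradient_log_mul_eq_integral {q : E → α → ℝ} {p : E → ℝ} {x : E} (c : E)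
    (hp_pos : 0 < p x) (hp_diff : DifferentiableAt ℝ p x)
    (hp_grad : gradient p x = ∫ y, gradient (fun x' => q x' y) x ∂μ)
    (hq_pos : ∀ y, 0 < q x y) (hq_diff : ∀ᵐ y ∂μ, DifferentiableAt ℝ (fun x' => q x' y) x)
    (hgrad_int : Integrable (fun y => gradient (fun x' => q x' y) x) μ) :
    ⟪c, gradient (fun x' => log (p x')) x⟫ * p x =
      ∫ y, ⟪c, gradient (fun x' => log (q x' y)) x⟫ * q x y ∂μ := by
  calc ⟪c, gradient (fun x' => log (p x')) x⟫ * p x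
      = ⟪c, ∫ y, gradient (fun x' => q x' y) x ∂μ⟫ := by
        rw [inner_gradient_log_mul hp_diff hp_pos, hp_grad]
    _ = ∫ y, ⟪c, gradient (fun x' => q x' y) x⟫ ∂μ := (integral_inner hgrad_int c).symm
    _ = ∫ y, ⟪c, gradient (fun x' => log (q x' y)) x⟫ * q x y ∂μ := by
        refine integral_congr_ae ?_
        filter_upwards [hq_diff] with y hy
        exact (inner_gradient_log_mul hy (hq_pos y) c).symm

end Parametric

section WeightedSquares

variable {X : Type*} [MeasurableSpace X] {μ : Measure X}
  {E : Type*} [NormedAddCommGroup E] {u v : X → E} {w : X → ℝ}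

theorem integrable_norm_sub_sq_mul (hw : ∀ᵐ x ∂μ, 0 ≤ w x)
    (hmeas : AEStronglyMeasurable (fun x => ‖u x - v x‖ ^ 2 * w x) μ)
    (hu : Integrable (fun x => ‖u x‖ ^ 2 * w x) μ)
    (hv : Integrable (fun x => ‖v x‖ ^ 2 * w x) μ) :
    Integrable (fun x => ‖u x - v x‖ ^ 2 * w x) μ :=
  Integrable.mono' ((hu.add hv).const_mul 2) hmeas <| by
    filter_upwards [hw] with x hx
    have hsq : ‖u x - v x‖ ^ 2 ≤ 2 * (‖u x‖ ^ 2 + ‖v x‖ ^ 2) :=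
      (pow_le_pow_left₀ (norm_nonneg _) (norm_sub_le _ _) 2).trans add_sq_le
    rw [Pi.add_apply, norm_mul, norm_pow, norm_norm, norm_of_nonneg hx]
    nlinarith

variable [InnerProductSpace ℝ E]

theorem integrable_inner_mul_of_norm_sub_sq_mul
    (hu : Integrable (fun x => ‖u x‖ ^ 2 * w x) μ)
    (hv : Integrable (fun x => ‖v x‖ ^ 2 * w x) μ)
    (huv : Integrable (fun x => ‖u x - v x‖ ^ 2 * w x) μ) :
    Integrable (fun x => ⟪u x, v x⟫ * w x) μ :=
  (((hu.add hv).sub huv).div_const 2).congr <| Eventually.of_forall fun x => by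
    simp only [Pi.add_apply, Pi.sub_apply, norm_sub_sq_real]
    ring

theorem integral_norm_sub_sq_mul (hu : Integrable (fun x => ‖u x‖ ^ 2 * w x) μ)
    (hv : Integrable (fun x => ‖v x‖ ^ 2 * w x) μ)
    (huv : Integrable (fun x => ⟪u x, v x⟫ * w x) μ) :
    ∫ x, ‖u x - v x‖ ^ 2 * w x ∂μ =
      (∫ x, ‖u x‖ ^ 2 * w x ∂μ) - 2 * (∫ x, ⟪u x, v x⟫ * w x ∂μ) +
        ∫ x, ‖v x‖ ^ 2 * w x ∂μ := by
  have hcross : Integrable (fun x => 2 * (⟪u x, v x⟫ * w x)) μ := huv.const_mul 2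
  simp only [norm_sub_sq_real, add_mul, sub_mul, mul_assoc]
  rw [integral_add (f := fun x => ‖u x‖ ^ 2 * w x - 2 * (⟪u x, v x⟫ * w x)) (hu.sub hcross) hv,
    integral_sub hu hcross, integral_const_mul]

end WeightedSquares

section Mixture

variable {X Y : Type*} [MeasurableSpace X] [MeasurableSpace Y] {μ : Measure X} {ν : Measure Y}

theorem integrable_prod_mul_of_integrable_mul_integral [SFinite ν] {g : X → ℝ} {q : X → Y → ℝ}
    (hmeas : AEStronglyMeasurable (fun z : X × Y => g z.1 * q z.1 z.2) (μ.prod ν))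
    (hq_nonneg : ∀ x, 0 ≤ᵐ[ν] q x) (hq : ∀ x, Integrable (q x) ν)
    (h : Integrable (fun x => g x * ∫ y, q x y ∂ν) μ) :
    Integrable (fun z : X × Y => g z.1 * q z.1 z.2) (μ.prod ν) := by
  refine (integrable_prod_iff hmeas).2
    ⟨Eventually.of_forall fun x => (hq x).const_mul (g x), h.norm.congr ?_⟩
  refine Eventually.of_forall fun x => ?_
  dsimp only
  rw [norm_mul, norm_of_nonneg (integral_nonneg_of_ae (hq_nonneg x)), ← integral_const_mul]
  refine integral_congr_ae ((hq_nonneg x).mono fun y hy => ?_)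
  simp only [norm_mul, norm_of_nonneg hy]

variable [SFinite μ] [SFinite ν] {E : Type*} [NormedAddCommGroup E] [InnerProductSpace ℝ E]

theorem integral_norm_sub_sq_mul_eq_of_integral_inner_mul
    {f s : X → E} {p : X → ℝ} {σ : X → Y → E} {q : X → Y → ℝ}
    (hp : ∀ x, p x = ∫ y, q x y ∂ν)
    (hcross : ∀ᵐ x ∂μ, ⟪f x, s x⟫ * p x = ∫ y, ⟪f x, σ x y⟫ * q x y ∂ν)
    (hf_p : Integrable (fun x => ‖f x‖ ^ 2 * p x) μ)
    (hs_p : Integrable (fun x => ‖s x‖ ^ 2 * p x) μ)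
    (hfs_p : Integrable (fun x => ‖f x - s x‖ ^ 2 * p x) μ)
    (hf_q : Integrable (fun z : X × Y => ‖f z.1‖ ^ 2 * q z.1 z.2) (μ.prod ν))
    (hσ_q : Integrable (fun z : X × Y => ‖σ z.1 z.2‖ ^ 2 * q z.1 z.2) (μ.prod ν))
    (hfσ_q : Integrable (fun z : X × Y => ‖f z.1 - σ z.1 z.2‖ ^ 2 * q z.1 z.2) (μ.prod ν)) :
    ∫ x, ‖f x - s x‖ ^ 2 * p x ∂μ =
      (∫ x, ∫ y, ‖f x - σ x y‖ ^ 2 * q x y ∂ν ∂μ) +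
        ((∫ x, ‖s x‖ ^ 2 * p x ∂μ) - ∫ x, ∫ y, ‖σ x y‖ ^ 2 * q x y ∂ν ∂μ) := by
  have hfσ_inner := integrable_inner_mul_of_norm_sub_sq_mul hf_q hσ_q hfσ_q
  have hfσ : ∫ x, ∫ y, ‖f x - σ x y‖ ^ 2 * q x y ∂ν ∂μ =
      ∫ z, ‖f z.1 - σ z.1 z.2‖ ^ 2 * q z.1 z.2 ∂μ.prod ν := integral_integral hfσ_q
  have hσ : ∫ x, ∫ y, ‖σ x y‖ ^ 2 * q x y ∂ν ∂μ =
      ∫ z, ‖σ z.1 z.2‖ ^ 2 * q z.1 z.2 ∂μ.prod ν := integral_integral hσ_q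
  have hquad : ∫ z, ‖f z.1‖ ^ 2 * q z.1 z.2 ∂μ.prod ν = ∫ x, ‖f x‖ ^ 2 * p x ∂μ := by
    rw [integral_prod _ hf_q]
    exact integral_congr_ae <| Eventually.of_forall fun x => by
      simp only [integral_const_mul, hp x]
  have hlin : ∫ z, ⟪f z.1, σ z.1 z.2⟫ * q z.1 z.2 ∂μ.prod ν = ∫ x, ⟪f x, s x⟫ * p x ∂μ := by
    rw [integral_prod _ hfσ_inner]
    exact (integral_congr_ae hcross).symm
  rw [hfσ, hσ, integral_norm_sub_sq_mul hf_q hσ_q hfσ_inner, hquad, hlin,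
    integral_norm_sub_sq_mul hf_p hs_p (integrable_inner_mul_of_norm_sub_sq_mul hf_p hs_p hfs_p)]
  ring

end Mixture

/-- **Conditional score matching identity (Vincent).**
Let `ν` be a Borel probability measure on `ℝᵐ` and `q : ℝⁿ × ℝᵐ → ℝ` a measurable,
everywhere positive kernel such that for `ν`-a.e. `y` the map `x ↦ q x y` is a
probability density on `ℝⁿ` differentiable in `x`. Let `p x = ∫ q x y dν(y)`, and
assume `p` is everywhere positive, differentiable, with
`∇p(x) = ∫ ∇ₓ q(x, y) dν(y)`, and that the score second moments
`∫ ‖∇ log p‖² p dx` and `∫∫ ‖∇ₓ log q‖² q dν dx` are finite. Then for every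
measurable `f : ℝⁿ → ℝⁿ` with `∫ ‖f‖² p dx < ∞` (and the required joint
integrability),
`∫ ‖f − ∇ log p‖² p dx = ∫∫ ‖f − ∇ₓ log q‖² q dν dx + C`
where `C = ∫ ‖∇ log p‖² p dx − ∫∫ ‖∇ₓ log q‖² q dν dx` does not depend on `f`. -/
theorem vincent_conditional_score_matching
    (n m : ℕ)
    (ν : Measure (EuclideanSpace ℝ (Fin m))) [IsProbabilityMeasure ν]
    (q : EuclideanSpace ℝ (Fin n) → EuclideanSpace ℝ (Fin m) → ℝ)
    (hq_meas : Measurable (Function.uncurry q))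
    (hq_pos : ∀ x y, 0 < q x y)
    (hq_density : ∀ᵐ y ∂ν, (∫ x, q x y = 1) ∧ ∀ x, DifferentiableAt ℝ (fun x' => q x' y) x)
    (p : EuclideanSpace ℝ (Fin n) → ℝ)
    (hp : ∀ x, p x = ∫ y, q x y ∂ν)
    (hp_pos : ∀ x, 0 < p x)
    (hp_diff : ∀ x, DifferentiableAt ℝ p x)
    (hp_grad : ∀ x, gradient p x = ∫ y, gradient (fun x' => q x' y) x ∂ν)
    (hmom_p : Integrable (fun x => ‖gradient (fun x' => Real.log (p x')) x‖ ^ 2 * p x) volume)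
    (hmom_q : Integrable (fun xy : EuclideanSpace ℝ (Fin n) × EuclideanSpace ℝ (Fin m) =>
      ‖gradient (fun x' => Real.log (q x' xy.2)) xy.1‖ ^ 2 * q xy.1 xy.2) (volume.prod ν))
    (f : EuclideanSpace ℝ (Fin n) → EuclideanSpace ℝ (Fin n))
    (hf_meas : Measurable f)
    (hf_mom : Integrable (fun x => ‖f x‖ ^ 2 * p x) volume)
    (hf_joint : Integrable (fun xy : EuclideanSpace ℝ (Fin n) × EuclideanSpace ℝ (Fin m) =>
      ‖f xy.1 - gradient (fun x' => Real.log (q x' xy.2)) xy.1‖ ^ 2 * q xy.1 xy.2)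
      (volume.prod ν)) :
    ∫ x, ‖f x - gradient (fun x' => Real.log (p x')) x‖ ^ 2 * p x =
      (∫ x, ∫ y, ‖f x - gradient (fun x' => Real.log (q x' y)) x‖ ^ 2 * q x y ∂ν) +
      ((∫ x, ‖gradient (fun x' => Real.log (p x')) x‖ ^ 2 * p x) -
       (∫ x, ∫ y, ‖gradient (fun x' => Real.log (q x' y)) x‖ ^ 2 * q x y ∂ν)) := by
  have hq_int : ∀ x, Integrable (q x) ν := fun x =>
    .of_integral_ne_zero ((hp x).symm.trans_ne (hp_pos x).ne')
  have hq_diff : ∀ x, ∀ᵐ y ∂ν, DifferentiableAt ℝ (fun x' => q x' y) x := fun x =>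
    hq_density.mono fun y hy => hy.2 x
  have hq_meas_left : ∀ x, Measurable (q x) := fun x => hq_meas.comp measurable_prodMk_left
  have hcross : ∀ᵐ x, ⟪f x, gradient (fun x' => log (p x')) x⟫ * p x =
      ∫ y, ⟪f x, gradient (fun x' => log (q x' y)) x⟫ * q x y ∂ν := by
    filter_upwards [hmom_q.prod_right_ae] with x hscore
    exact inner_gradient_log_mul_eq_integral (f x) (hp_pos x) (hp_diff x) (hp_grad x)
      (hq_pos x) (hq_diff x) <| integrable_gradient_of_integrable_norm_gradient_log_sq
        (aestronglyMeasurable_gradient hq_meas_left (hq_diff x)) (hq_pos x) (hq_diff x)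
        (hq_int x) hscore
  have hfs_p := integrable_norm_sub_sq_mul (Eventually.of_forall fun x => (hp_pos x).le)
    (((hf_meas.sub (measurable_gradient _)).norm.pow_const 2).mul
      (Differentiable.continuous hp_diff).measurable).aestronglyMeasurable hf_mom hmom_p
  have hf_q := integrable_prod_mul_of_integrable_mul_integral (g := fun x => ‖f x‖ ^ 2)
    ((((hf_meas.comp measurable_fst).norm.pow_const 2).mul hq_meas).aestronglyMeasurable)
    (fun x => ae_of_all _ fun y => (hq_pos x y).le) hq_int
    (hf_mom.congr (Eventually.of_forall fun x => by simp only [hp x]))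
  exact integral_norm_sub_sq_mul_eq_of_integral_inner_mul hp hcross hf_mom hmom_p hfs_p hf_q
    hmom_q hf_joint
end

section
/- (Denoising learns the force field: minimizer correspondence.) Let n ∈ ℕ, τ > 0, let ν be a Borel probability measure on ℝⁿ, define q(x | x₀) = (2πτ²)^(−n/2) · exp(−‖x − x₀‖² / (2τ²)) and p(x) = ∫ q(x | x₀) dν(x₀), and let S be the class of measurable f : ℝⁿ → ℝⁿ with ∫ ‖f(x)‖² p(x) dx < ∞. Define L_den(f) = ∫∫ ‖f(x) − (x − x₀)‖² q(x | x₀) dν(x₀) dx and the force-field loss L_ff(g) = ∫ ‖g(x) − ∇(log p)(x)‖² p(x) dx. Then f ∈ S minimizes L_den over S if and only if the function x ↦ −(1/τ²) • f(x) minimizes L_ff over S. In particular, writing the Boltzmann energy E(x) = −log p(x), so that the force field is −∇E(x) = ∇ log p(x), minimizing the coordinate-denoising objective is equivalent to minimizing the force-field prediction objective ∫ ‖g(x) − (−∇E(x))‖² p(x) dx. -/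
/-!
For fixed `x`, the inner `x₀`-integral of the denoising loss is a quadratic in `f(x)`; completing
the square gives `p(x) ‖f(x) - m(x)‖² + V(x)`, where `m(x)` is the posterior mean of the noise
`x - x₀` given `x` and `V(x) ≥ 0` does not depend on `f`. Differentiating under the integral sign
gives Tweedie's formula `∇ log p = -m / τ²`, so the first term is
`τ⁴ ‖-(1/τ²) f(x) - ∇ log p(x)‖² p(x)`. Hence `L_den f = τ⁴ L_ff (-(1/τ²) f) + ∫ V` on `S`, and
`f ↦ -(1/τ²) f` is a bijection of `S`. The integrability needed to split the integrals comes from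
`V ≥ 0`, i.e. `p ‖m‖² ≤ ∫ ‖x - x₀‖² q dν`, and from the finite second moment of the Gaussian.
-/

open Real MeasureTheory RealInnerProductSpace Set

theorem mul_exp_neg_div_le (u : ℝ) {s : ℝ} (hs : 0 < s) : u * exp (-u / s) ≤ s := by
  have h := mul_exp_neg_le_exp_neg_one (u / s)
  have h1 : exp (-1) ≤ 1 := exp_le_one_iff.mpr (by norm_num)
  calc u * exp (-u / s) = s * (u / s * exp (-(u / s))) := by field_simp
    _ ≤ s * 1 := by gcongr; linarith
    _ = s := mul_one s

theorem integrable_exp_neg_mul_sq_norm {V : Type*} [NormedAddCommGroup V] [InnerProductSpace ℝ V]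
    [FiniteDimensional ℝ V] [MeasurableSpace V] [BorelSpace V] {b : ℝ} (hb : 0 < b) :
    Integrable (fun v : V => exp (-b * ‖v‖ ^ 2)) :=
  .of_integral_ne_zero (by rw [GaussianFourier.integral_rexp_neg_mul_sq_norm hb]; positivity)

noncomputable section GaussKernel

variable {E : Type*} [NormedAddCommGroup E] {c τ : ℝ}

def gaussKernel (c τ : ℝ) (y : E) : ℝ := c * exp (-‖y‖ ^ 2 / (2 * τ ^ 2))

theorem gaussKernel_pos (hc : 0 < c) (y : E) : 0 < gaussKernel c τ y := by
  unfold gaussKernel; positivity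

theorem gaussKernel_nonneg (hc : 0 ≤ c) (y : E) : 0 ≤ gaussKernel c τ y := by
  unfold gaussKernel; positivity

theorem gaussKernel_le (hc : 0 ≤ c) (y : E) : gaussKernel c τ y ≤ c :=
  mul_le_of_le_one_right hc <| exp_le_one_iff.mpr <|
    div_nonpos_of_nonpos_of_nonneg (neg_nonpos.mpr (sq_nonneg _)) (by positivity)

theorem sq_norm_mul_gaussKernel_le (hc : 0 ≤ c) (hτ : τ ≠ 0) (y : E) :
    ‖y‖ ^ 2 * gaussKernel c τ y ≤ c * (2 * τ ^ 2) := by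
  calc ‖y‖ ^ 2 * gaussKernel c τ y = c * (‖y‖ ^ 2 * exp (-‖y‖ ^ 2 / (2 * τ ^ 2))) := by
        unfold gaussKernel; ring
    _ ≤ c * (2 * τ ^ 2) :=
        mul_le_mul_of_nonneg_left (mul_exp_neg_div_le _ (by positivity)) hc

theorem norm_mul_gaussKernel_le (hc : 0 ≤ c) (hτ : τ ≠ 0) (y : E) :
    ‖y‖ * gaussKernel c τ y ≤ c * (1 + 2 * τ ^ 2) := by
  have hk := gaussKernel_nonneg (τ := τ) hc y
  have hy : ‖y‖ ≤ 1 + ‖y‖ ^ 2 := by nlinarith [sq_nonneg (‖y‖ - 1)]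
  calc ‖y‖ * gaussKernel c τ y ≤ gaussKernel c τ y + ‖y‖ ^ 2 * gaussKernel c τ y := by
        nlinarith
    _ ≤ c + c * (2 * τ ^ 2) := add_le_add (gaussKernel_le hc y) (sq_norm_mul_gaussKernel_le hc hτ y)
    _ = c * (1 + 2 * τ ^ 2) := by ring

@[fun_prop]
theorem continuous_gaussKernel : Continuous (gaussKernel (E := E) c τ) := by
  unfold gaussKernel; fun_prop

theorem hasFDerivAt_gaussKernel_sub [InnerProductSpace ℝ E] (x x₀ : E) :
    HasFDerivAt (fun x => gaussKernel c τ (x - x₀))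
      (innerSL ℝ (-((1 / τ ^ 2) • gaussKernel c τ (x - x₀) • (x - x₀)))) x := by
  have h := ((HasFDerivAt.mul_const ((hasFDerivAt_id x).sub_const x₀).norm_sq.neg
    (2 * τ ^ 2)⁻¹).exp).const_mul c
  simp only [gaussKernel, div_eq_mul_inv]
  refine h.congr_fderiv ?_
  ext v
  simp
  ring

theorem integrable_sq_norm_mul_gaussKernel [InnerProductSpace ℝ E] [FiniteDimensional ℝ E]
    [MeasurableSpace E] [BorelSpace E] (hτ : τ ≠ 0) :
    Integrable (fun y : E => ‖y‖ ^ 2 * gaussKernel c τ y) := by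
  refine ((integrable_exp_neg_mul_sq_norm (V := E) (b := 1 / (4 * τ ^ 2)) (by positivity)).const_mul
    (|c| * (4 * τ ^ 2))).mono' (by fun_prop) (.of_forall fun y => ?_)
  have hsplit : exp (-‖y‖ ^ 2 / (2 * τ ^ 2))
      = exp (-‖y‖ ^ 2 / (4 * τ ^ 2)) * exp (-(1 / (4 * τ ^ 2)) * ‖y‖ ^ 2) := by
    rw [← exp_add]; congr 1; field_simp; ring
  have h := mul_exp_neg_div_le (‖y‖ ^ 2) (s := 4 * τ ^ 2) (by positivity)
  rw [norm_mul, norm_pow, norm_norm, gaussKernel, norm_mul, norm_of_nonneg (exp_pos _).le, hsplit]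
  calc ‖y‖ ^ 2 * (‖c‖ * (exp (-‖y‖ ^ 2 / (4 * τ ^ 2)) * exp (-(1 / (4 * τ ^ 2)) * ‖y‖ ^ 2)))
      = |c| * (‖y‖ ^ 2 * exp (-‖y‖ ^ 2 / (4 * τ ^ 2))) * exp (-(1 / (4 * τ ^ 2)) * ‖y‖ ^ 2) := by
        rw [Real.norm_eq_abs]; ring
    _ ≤ |c| * (4 * τ ^ 2) * exp (-(1 / (4 * τ ^ 2)) * ‖y‖ ^ 2) := by gcongr

end GaussKernel

section BiasVariance

variable {α E : Type*} [MeasurableSpace α] {ν : Measure α}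
  [NormedAddCommGroup E] [InnerProductSpace ℝ E] [CompleteSpace E] {w : α → ℝ} {y : α → E}

theorem integral_norm_sub_sq_mul_s7 (hw : Integrable w ν) (hwy : Integrable (fun ξ => w ξ • y ξ) ν)
    (hwy2 : Integrable (fun ξ => ‖y ξ‖ ^ 2 * w ξ) ν) (a : E) :
    ∫ ξ, ‖a - y ξ‖ ^ 2 * w ξ ∂ν
      = ‖a‖ ^ 2 * ∫ ξ, w ξ ∂ν - 2 * ⟪a, ∫ ξ, w ξ • y ξ ∂ν⟫ + ∫ ξ, ‖y ξ‖ ^ 2 * w ξ ∂ν := by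
  have hexpand : ∀ ξ, ‖a - y ξ‖ ^ 2 * w ξ
      = ‖a‖ ^ 2 * w ξ - 2 * ⟪a, w ξ • y ξ⟫ + ‖y ξ‖ ^ 2 * w ξ := by
    intro ξ; rw [norm_sub_sq_real, real_inner_smul_right]; ring
  have hinner : Integrable (fun ξ => ⟪a, w ξ • y ξ⟫) ν := hwy.const_inner a
  simp_rw [hexpand]
  rw [integral_add (f := fun ξ => ‖a‖ ^ 2 * w ξ - 2 * ⟪a, w ξ • y ξ⟫)
      ((hw.const_mul _).sub (hinner.const_mul 2)) hwy2,
    integral_sub (hw.const_mul _) (hinner.const_mul 2), integral_const_mul, integral_const_mul,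
    integral_inner hwy]

theorem integral_norm_sub_sq_mul_eq_add (hw : Integrable w ν)
    (hwy : Integrable (fun ξ => w ξ • y ξ) ν) (hwy2 : Integrable (fun ξ => ‖y ξ‖ ^ 2 * w ξ) ν)
    (hP : ∫ ξ, w ξ ∂ν ≠ 0) (a : E) :
    ∫ ξ, ‖a - y ξ‖ ^ 2 * w ξ ∂ν
      = ‖a - (∫ ξ, w ξ ∂ν)⁻¹ • ∫ ξ, w ξ • y ξ ∂ν‖ ^ 2 * ∫ ξ, w ξ ∂ν
        + (∫ ξ, ‖y ξ‖ ^ 2 * w ξ ∂ν - ‖∫ ξ, w ξ • y ξ ∂ν‖ ^ 2 / ∫ ξ, w ξ ∂ν) := by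
  rw [integral_norm_sub_sq_mul_s7 hw hwy hwy2, norm_sub_sq_real, real_inner_smul_right, norm_smul,
    norm_inv, Real.norm_eq_abs, mul_pow, inv_pow, sq_abs]
  field_simp
  ring

theorem integral_sq_norm_mul_sub_sq_norm_integral_div_nonneg (hw0 : 0 ≤ w) (hw : Integrable w ν)
    (hwy : Integrable (fun ξ => w ξ • y ξ) ν) (hwy2 : Integrable (fun ξ => ‖y ξ‖ ^ 2 * w ξ) ν)
    (hP : ∫ ξ, w ξ ∂ν ≠ 0) :
    0 ≤ ∫ ξ, ‖y ξ‖ ^ 2 * w ξ ∂ν - ‖∫ ξ, w ξ • y ξ ∂ν‖ ^ 2 / ∫ ξ, w ξ ∂ν := by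
  have h := integral_norm_sub_sq_mul_eq_add hw hwy hwy2 hP ((∫ ξ, w ξ ∂ν)⁻¹ • ∫ ξ, w ξ • y ξ ∂ν)
  rw [sub_self, norm_zero, zero_pow two_ne_zero, zero_mul, zero_add] at h
  exact h ▸ integral_nonneg fun ξ => mul_nonneg (sq_nonneg _) (hw0 ξ)

end BiasVariance

theorem gradient_fun_neg {F : Type*} [NormedAddCommGroup F] [InnerProductSpace ℝ F]
    [CompleteSpace F] (f : F → ℝ) (x : F) : gradient (fun y => -f y) x = -gradient f x := by
  simp [gradient, fderiv_fun_neg]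

theorem isMinOn_iff_isMinOn_of_eq_mul_add {α : Type*} {S : Set α} {L₁ L₂ : α → ℝ} {φ : α → α}
    (hmaps : MapsTo φ S S) (hsurj : SurjOn φ S S) {a b : ℝ} (ha : 0 < a)
    (hL : ∀ f ∈ S, L₁ f = a * L₂ (φ f) + b) {f : α} (hf : f ∈ S) :
    IsMinOn L₁ S f ↔ IsMinOn L₂ S (φ f) := by
  simp only [isMinOn_iff]
  constructor
  · intro hmin g hg
    obtain ⟨h, hh, rfl⟩ := hsurj hg
    have := hmin h hh
    rw [hL f hf, hL h hh] at this
    nlinarith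
  · intro hmin g hg
    have := hmin (φ g) (hmaps hg)
    rw [hL f hf, hL g hg]
    nlinarith

def sqIntegrableWrt {E F : Type*} [MeasurableSpace E] [NormedAddCommGroup F] [MeasurableSpace F]
    (μ : Measure E) (p : E → ℝ) : Set (E → F) :=
  {f | Measurable f ∧ Integrable (fun x => ‖f x‖ ^ 2 * p x) μ}

theorem smul_mem_sqIntegrableWrt {E F : Type*} [MeasurableSpace E] [NormedAddCommGroup F]
    [NormedSpace ℝ F] [MeasurableSpace F] [BorelSpace F] {μ : Measure E} {p : E → ℝ} {f : E → F}
    (hf : f ∈ sqIntegrableWrt μ p) (a : ℝ) : (fun x => a • f x) ∈ sqIntegrableWrt μ p := by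
  refine ⟨hf.1.const_smul a, (hf.2.const_mul (a ^ 2)).congr (.of_forall fun x => ?_)⟩
  simp only [norm_smul, mul_pow, Real.norm_eq_abs, sq_abs]
  ring

noncomputable section GaussMixture

variable {E : Type*} [NormedAddCommGroup E] [InnerProductSpace ℝ E] [FiniteDimensional ℝ E]
  [MeasurableSpace E] [BorelSpace E] {c τ : ℝ} {ν : Measure E}

/- With `q(x | x₀) = gaussKernel c τ (x - x₀)`, `noiseMoment`, `noiseSecondMoment` and
`noiseVariance` are `p(x)` times the posterior mean, second moment and variance of the noise
`x - x₀` given `x`. -/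

def mixtureDensity (c τ : ℝ) (ν : Measure E) (x : E) : ℝ := ∫ x₀, gaussKernel c τ (x - x₀) ∂ν

def noiseMoment (c τ : ℝ) (ν : Measure E) (x : E) : E :=
  ∫ x₀, gaussKernel c τ (x - x₀) • (x - x₀) ∂ν

def noiseSecondMoment (c τ : ℝ) (ν : Measure E) (x : E) : ℝ :=
  ∫ x₀, ‖x - x₀‖ ^ 2 * gaussKernel c τ (x - x₀) ∂ν

def noiseVariance (c τ : ℝ) (ν : Measure E) (x : E) : ℝ :=
  noiseSecondMoment c τ ν x - ‖noiseMoment c τ ν x‖ ^ 2 / mixtureDensity c τ ν x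

section Integrability

variable [IsFiniteMeasure ν] (hc : 0 ≤ c) (hτ : τ ≠ 0) (x : E)
include hc

theorem integrable_gaussKernel_sub : Integrable (fun x₀ => gaussKernel c τ (x - x₀)) ν :=
  .of_bound (by fun_prop) c <| .of_forall fun x₀ => by
    rw [norm_of_nonneg (gaussKernel_nonneg hc _)]; exact gaussKernel_le hc _

include hτ

theorem integrable_gaussKernel_sub_smul :
    Integrable (fun x₀ => gaussKernel c τ (x - x₀) • (x - x₀)) ν :=
  .of_bound (by fun_prop) _ <| .of_forall fun x₀ => by
    rw [norm_smul, norm_of_nonneg (gaussKernel_nonneg hc _), mul_comm]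
    exact norm_mul_gaussKernel_le hc hτ _

theorem integrable_sq_norm_sub_mul_gaussKernel_sub :
    Integrable (fun x₀ => ‖x - x₀‖ ^ 2 * gaussKernel c τ (x - x₀)) ν :=
  .of_bound (by fun_prop) _ <| .of_forall fun x₀ => by
    rw [norm_of_nonneg (mul_nonneg (sq_nonneg _) (gaussKernel_nonneg hc _))]
    exact sq_norm_mul_gaussKernel_le hc hτ _

end Integrability

theorem mixtureDensity_pos [IsFiniteMeasure ν] [NeZero ν] (hc : 0 < c) (x : E) :
    0 < mixtureDensity c τ ν x := by
  refine (integral_pos_iff_support_of_nonneg (fun x₀ => (gaussKernel_pos hc _).le)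
    (integrable_gaussKernel_sub hc.le x)).mpr ?_
  simp [Function.support, (gaussKernel_pos hc _).ne', Measure.measure_univ_pos.mpr (NeZero.ne ν)]

theorem hasFDerivAt_mixtureDensity [IsFiniteMeasure ν] (hc : 0 ≤ c) (hτ : τ ≠ 0) (x : E) :
    HasFDerivAt (mixtureDensity c τ ν) (innerSL ℝ (-((1 / τ ^ 2) • noiseMoment c τ ν x))) x := by
  have h := hasFDerivAt_integral_of_dominated_of_fderiv_le (μ := ν) (x₀ := x)
    (F := fun x x₀ => gaussKernel c τ (x - x₀))
    (F' := fun x x₀ => innerSL ℝ (-((1 / τ ^ 2) • gaussKernel c τ (x - x₀) • (x - x₀))))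
    (bound := fun _ => 1 / τ ^ 2 * (c * (1 + 2 * τ ^ 2))) (s := univ) Filter.univ_mem
    (.of_forall fun _ => by fun_prop) (integrable_gaussKernel_sub hc x) (by fun_prop)
    (.of_forall fun x₀ x' _ => ?_) (integrable_const _)
    (.of_forall fun x₀ x' _ => hasFDerivAt_gaussKernel_sub x' x₀)
  · have hint : Integrable (fun x₀ => -((1 / τ ^ 2) • gaussKernel c τ (x - x₀) • (x - x₀))) ν :=
      ((integrable_gaussKernel_sub_smul hc hτ x).smul (1 / τ ^ 2)).neg
    rwa [ContinuousLinearMap.integral_comp_comm _ hint, integral_neg, integral_smul] at h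
  · rw [innerSL_apply_norm, norm_neg, norm_smul, norm_smul, norm_of_nonneg (by positivity),
      norm_of_nonneg (gaussKernel_nonneg hc _), mul_comm (gaussKernel _ _ _)]
    exact mul_le_mul_of_nonneg_left (norm_mul_gaussKernel_le hc hτ _) (by positivity)

/-- Tweedie's formula `∇ log p(x) = -𝔼[x - x₀ | x] / τ²`. -/
theorem hasGradientAt_log_mixtureDensity [IsFiniteMeasure ν] [NeZero ν] (hc : 0 < c)
    (hτ : τ ≠ 0) (x : E) :
    HasGradientAt (fun x => log (mixtureDensity c τ ν x))
      (-((1 / τ ^ 2) • (mixtureDensity c τ ν x)⁻¹ • noiseMoment c τ ν x)) x := by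
  rw [hasGradientAt_iff_hasFDerivAt]
  refine ((hasFDerivAt_mixtureDensity hc.le hτ x).log (mixtureDensity_pos hc x).ne').congr_fderiv ?_
  ext v
  simp only [InnerProductSpace.toDual_apply_apply, FunLike.coe_smul, Pi.smul_apply,
    innerSL_apply_apply, inner_neg_left, real_inner_smul_left, smul_eq_mul]
  ring

theorem stronglyMeasurable_mixtureDensity [SFinite ν] :
    StronglyMeasurable (mixtureDensity c τ ν) :=
  (show Continuous fun z : E × E => gaussKernel c τ (z.1 - z.2) by fun_prop).stronglyMeasurable
    |>.integral_prod_right'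

theorem stronglyMeasurable_noiseMoment [SFinite ν] : StronglyMeasurable (noiseMoment c τ ν) :=
  (show Continuous fun z : E × E => gaussKernel c τ (z.1 - z.2) • (z.1 - z.2) by fun_prop)
    |>.stronglyMeasurable.integral_prod_right'

theorem stronglyMeasurable_noiseSecondMoment [SFinite ν] :
    StronglyMeasurable (noiseSecondMoment c τ ν) :=
  (show Continuous fun z : E × E => ‖z.1 - z.2‖ ^ 2 * gaussKernel c τ (z.1 - z.2) by fun_prop)
    |>.stronglyMeasurable.integral_prod_right'

theorem integrable_noiseSecondMoment [IsFiniteMeasure ν] (hτ : τ ≠ 0) :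
    Integrable (noiseSecondMoment c τ ν) := by
  have h := (integrable_const (1 : ℝ) (μ := ν)).convolution_integrand (ContinuousLinearMap.mul ℝ ℝ)
    (integrable_sq_norm_mul_gaussKernel (c := c) (E := E) hτ) |>.integral_prod_left
  exact h.congr (.of_forall fun x => by simp [noiseSecondMoment])

section NoiseVariance

variable [IsFiniteMeasure ν] [NeZero ν] (hc : 0 < c) (hτ : τ ≠ 0)
include hc hτ

theorem integral_norm_sub_sq_mul_gaussKernel_sub_eq_add (x a : E) :
    ∫ x₀, ‖a - (x - x₀)‖ ^ 2 * gaussKernel c τ (x - x₀) ∂ν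
      = ‖a - (mixtureDensity c τ ν x)⁻¹ • noiseMoment c τ ν x‖ ^ 2 * mixtureDensity c τ ν x
        + noiseVariance c τ ν x :=
  integral_norm_sub_sq_mul_eq_add (integrable_gaussKernel_sub hc.le x)
    (integrable_gaussKernel_sub_smul hc.le hτ x)
    (integrable_sq_norm_sub_mul_gaussKernel_sub hc.le hτ x) (mixtureDensity_pos hc x).ne' a

theorem noiseVariance_nonneg (x : E) : 0 ≤ noiseVariance c τ ν x :=
  integral_sq_norm_mul_sub_sq_norm_integral_div_nonneg (fun _ => (gaussKernel_pos hc _).le)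
    (integrable_gaussKernel_sub hc.le x) (integrable_gaussKernel_sub_smul hc.le hτ x)
    (integrable_sq_norm_sub_mul_gaussKernel_sub hc.le hτ x) (mixtureDensity_pos hc x).ne'

theorem integrable_noiseVariance : Integrable (noiseVariance c τ ν) := by
  refine (integrable_noiseSecondMoment (c := c) (ν := ν) hτ).mono' ?_ (.of_forall fun x => ?_)
  · exact (stronglyMeasurable_noiseSecondMoment (c := c) (τ := τ) (ν := ν) |>.measurable.sub
      ((stronglyMeasurable_noiseMoment.measurable.norm.pow_const 2).div
        stronglyMeasurable_mixtureDensity.measurable)).aestronglyMeasurable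
  · rw [norm_of_nonneg (noiseVariance_nonneg hc hτ x)]
    exact sub_le_self _ (div_nonneg (sq_nonneg _) (mixtureDensity_pos hc x).le)

end NoiseVariance

section Score

variable [IsFiniteMeasure ν] [NeZero ν] (hc : 0 < c) (hτ : τ ≠ 0)
include hc hτ

theorem gradient_log_mixtureDensity (x : E) :
    gradient (fun x => log (mixtureDensity c τ ν x)) x
      = -((1 / τ ^ 2) • (mixtureDensity c τ ν x)⁻¹ • noiseMoment c τ ν x) :=
  (hasGradientAt_log_mixtureDensity hc hτ x).gradient

theorem sq_norm_gradient_log_mixtureDensity_mul_le (x : E) :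
    ‖gradient (fun x => log (mixtureDensity c τ ν x)) x‖ ^ 2 * mixtureDensity c τ ν x
      ≤ (1 / τ ^ 2) ^ 2 * noiseSecondMoment c τ ν x := by
  have hp := mixtureDensity_pos (ν := ν) (τ := τ) hc x
  have hvar := noiseVariance_nonneg (ν := ν) hc hτ x
  rw [noiseVariance, sub_nonneg] at hvar
  rw [gradient_log_mixtureDensity hc hτ, norm_neg, norm_smul, norm_smul,
    norm_of_nonneg (by positivity : (0 : ℝ) ≤ 1 / τ ^ 2), norm_inv, norm_of_nonneg hp.le]
  calc (1 / τ ^ 2 * ((mixtureDensity c τ ν x)⁻¹ * ‖noiseMoment c τ ν x‖)) ^ 2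
        * mixtureDensity c τ ν x
      = (1 / τ ^ 2) ^ 2 * (‖noiseMoment c τ ν x‖ ^ 2 / mixtureDensity c τ ν x) := by
        field_simp
    _ ≤ (1 / τ ^ 2) ^ 2 * noiseSecondMoment c τ ν x := by gcongr

theorem integrable_sq_norm_sub_gradient_log_mixtureDensity_mul {g : E → E}
    (hg : g ∈ sqIntegrableWrt volume (mixtureDensity c τ ν)) :
    Integrable fun x => ‖g x - gradient (fun x => log (mixtureDensity c τ ν x)) x‖ ^ 2
      * mixtureDensity c τ ν x := by
  have hp : Measurable (mixtureDensity c τ ν) := stronglyMeasurable_mixtureDensity.measurable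
  refine ((hg.2.const_mul 2).add ((integrable_noiseSecondMoment (c := c) (ν := ν) hτ).const_mul
    (2 * (1 / τ ^ 2) ^ 2))).mono' ?_ (.of_forall fun x => ?_)
  · simp_rw [gradient_log_mixtureDensity hc hτ]
    exact (((hg.1.sub ((hp.inv.smul stronglyMeasurable_noiseMoment.measurable).const_smul
      _).neg).norm.pow_const 2).mul hp).aestronglyMeasurable
  · set s := gradient (fun x => log (mixtureDensity c τ ν x)) x
    have hp0 := (mixtureDensity_pos (ν := ν) (τ := τ) hc x).le
    have hsub : ‖g x - s‖ ^ 2 ≤ 2 * ‖g x‖ ^ 2 + 2 * ‖s‖ ^ 2 := by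
      nlinarith [norm_sub_le (g x) s, norm_nonneg (g x - s), sq_nonneg (‖g x‖ - ‖s‖)]
    have hscore := sq_norm_gradient_log_mixtureDensity_mul_le (ν := ν) hc hτ x
    rw [norm_of_nonneg (by positivity), Pi.add_apply]
    nlinarith [mul_le_mul_of_nonneg_right hsub hp0]

theorem integral_norm_sub_sq_mul_gaussKernel_sub_eq_score (x a : E) :
    ∫ x₀, ‖a - (x - x₀)‖ ^ 2 * gaussKernel c τ (x - x₀) ∂ν
      = τ ^ 4 * (‖-((1 / τ ^ 2) • a) - gradient (fun x => log (mixtureDensity c τ ν x)) x‖ ^ 2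
          * mixtureDensity c τ ν x) + noiseVariance c τ ν x := by
  rw [integral_norm_sub_sq_mul_gaussKernel_sub_eq_add hc hτ, gradient_log_mixtureDensity hc hτ,
    neg_sub_neg, ← smul_sub, norm_smul, norm_of_nonneg (by positivity : (0 : ℝ) ≤ 1 / τ ^ 2),
    norm_sub_rev]
  field_simp

theorem integral_denoising_eq_mul_integral_score_add {f : E → E}
    (hf : f ∈ sqIntegrableWrt volume (mixtureDensity c τ ν)) :
    ∫ x, ∫ x₀, ‖f x - (x - x₀)‖ ^ 2 * gaussKernel c τ (x - x₀) ∂ν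
      = τ ^ 4 * (∫ x, ‖-((1 / τ ^ 2) • f x)
            - gradient (fun x => log (mixtureDensity c τ ν x)) x‖ ^ 2 * mixtureDensity c τ ν x) + ∫ x, noiseVariance c τ ν x := by
  have hg : (fun x => -((1 / τ ^ 2) • f x)) ∈ sqIntegrableWrt volume (mixtureDensity c τ ν) := by
    simpa only [neg_smul] using smul_mem_sqIntegrableWrt hf (-(1 / τ ^ 2))
  simp_rw [integral_norm_sub_sq_mul_gaussKernel_sub_eq_score hc hτ]
  rw [integral_add ((integrable_sq_norm_sub_gradient_log_mixtureDensity_mul hc hτ hg).const_mul _)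
    (integrable_noiseVariance hc hτ), integral_const_mul]

end Score

end GaussMixture

/-- **Denoising learns the force field: minimizer correspondence.**
With `q(x | x₀) = (2πτ²)^(−n/2) · exp(−‖x − x₀‖²/(2τ²))`, `p x = ∫ q(x|x₀) dν(x₀)`,
`S` the class of measurable `f : ℝⁿ → ℝⁿ` with `∫ ‖f‖² p dx < ∞`,
`L_den f = ∫∫ ‖f(x) − (x − x₀)‖² q(x|x₀) dν(x₀) dx`, and
`L_ff g = ∫ ‖g(x) − ∇ log p(x)‖² p(x) dx`: a member `f ∈ S` minimizes `L_den`
over `S` iff `x ↦ −(1/τ²) • f(x)` minimizes `L_ff` over `S`. In particular, with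
the Boltzmann energy `E = −log p` (so `−∇E = ∇ log p` is the force field),
`L_ff g = ∫ ‖g(x) − (−∇E(x))‖² p(x) dx`, i.e. minimizing the coordinate-denoising
objective is equivalent to minimizing the force-field prediction objective. -/
theorem denoising_force_field_minimizer_correspondence
    (n : ℕ) (τ : ℝ) (hτ : 0 < τ)
    (ν : Measure (EuclideanSpace ℝ (Fin n))) [IsProbabilityMeasure ν]
    (q : EuclideanSpace ℝ (Fin n) → EuclideanSpace ℝ (Fin n) → ℝ)
    (hq : ∀ x x₀, q x x₀ = (2 * π * τ ^ 2) ^ (-(n : ℝ) / 2) *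
      Real.exp (-‖x - x₀‖ ^ 2 / (2 * τ ^ 2)))
    (p : EuclideanSpace ℝ (Fin n) → ℝ)
    (hp : ∀ x, p x = ∫ x₀, q x x₀ ∂ν)
    (S : Set (EuclideanSpace ℝ (Fin n) → EuclideanSpace ℝ (Fin n)))
    (hS : ∀ f, f ∈ S ↔ Measurable f ∧ Integrable (fun x => ‖f x‖ ^ 2 * p x) volume)
    (Lden Lff : (EuclideanSpace ℝ (Fin n) → EuclideanSpace ℝ (Fin n)) → ℝ)
    (hLden : ∀ f, Lden f = ∫ x, ∫ x₀, ‖f x - (x - x₀)‖ ^ 2 * q x x₀ ∂ν)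
    (hLff : ∀ g, Lff g = ∫ x,
      ‖g x - gradient (fun x' => Real.log (p x')) x‖ ^ 2 * p x)
    (E : EuclideanSpace ℝ (Fin n) → ℝ)
    (hE : ∀ x, E x = -Real.log (p x)) :
    (∀ f ∈ S,
      ((∀ g ∈ S, Lden f ≤ Lden g) ↔
        (∀ g ∈ S, Lff (fun x => -((1 / τ ^ 2) • f x)) ≤ Lff g))) ∧
    (∀ g, Lff g = ∫ x, ‖g x - -gradient E x‖ ^ 2 * p x) := by
  set c := (2 * π * τ ^ 2) ^ (-(n : ℝ) / 2)
  have hc : 0 < c := by positivity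
  obtain rfl : q = fun x x₀ => gaussKernel c τ (x - x₀) := funext₂ hq
  obtain rfl : p = mixtureDensity c τ ν := funext hp
  obtain rfl : E = fun x => -log (mixtureDensity c τ ν x) := funext hE
  obtain rfl : S = sqIntegrableWrt volume (mixtureDensity c τ ν) := Set.ext hS
  set S := sqIntegrableWrt (F := EuclideanSpace ℝ (Fin n)) volume (mixtureDensity c τ ν)
  set φ : (EuclideanSpace ℝ (Fin n) → EuclideanSpace ℝ (Fin n)) → _ :=
    fun f x => -((1 / τ ^ 2) • f x)
  have hmaps : MapsTo φ S S := fun g hg => by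
    simpa only [neg_smul] using smul_mem_sqIntegrableWrt hg (-(1 / τ ^ 2))
  have hsurj : SurjOn φ S S := fun g hg =>
    ⟨fun x => -(τ ^ 2) • g x, smul_mem_sqIntegrableWrt hg _, by
      funext x; simp [φ, smul_smul, hτ.ne']⟩
  have hL : ∀ f ∈ S, Lden f = τ ^ 4 * Lff (φ f) + ∫ x, noiseVariance c τ ν x := fun f hf => by
    rw [hLden, hLff]
    exact integral_denoising_eq_mul_integral_score_add hc hτ.ne' hf
  refine ⟨fun f hf => isMinOn_iff_isMinOn_of_eq_mul_add hmaps hsurj (by positivity) hL hf,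
    fun g => ?_⟩
  simp_rw [hLff, gradient_fun_neg, neg_neg]
end
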